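/- Primal error bound for Case II: with (x, y) the exact solution of A*y + i x = f, Ax = y, for any x̃ ∈ D(A) and any ψ ∈ D(A*): ‖x − x̃‖² + ‖A(x − x̃)‖² ≤ 2(‖f − i x̃ − A*ψ‖² + ‖ψ − A x̃‖²). -/

import Mathlib

open scoped ComplexInnerProductSpace

/- With e = x - x̃ and u = y - ψ the two residuals are A* u + i e and A e - u. Expanding their
squared norms, the cross terms only involve z = ⟪u, A e⟫ = ⟪A* u, e⟫, through
-2 (Re z + Im z) ≥ -2√2 |z|. Both Cauchy–Schwarz bounds |z| ≤ ‖u‖ ‖A e‖ and |z| ≤ ‖A* u‖ ‖e‖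
are then split by the weighted AM-GM inequality 2√2 a b ≤ 2 a² + b². -/

lemma Complex.two_mul_re_add_im_le {z : ℂ} {a b : ℝ} (h : ‖z‖ ≤ a * b) :
    2 * (z.re + z.im) ≤ 2 * a ^ 2 + b ^ 2 := by
  have hsq : z.re ^ 2 + z.im ^ 2 ≤ (a * b) ^ 2 :=
    calc z.re ^ 2 + z.im ^ 2 = ‖z‖ ^ 2 := by rw [Complex.sq_norm, Complex.normSq_apply]; ring
      _ ≤ (a * b) ^ 2 := pow_le_pow_left₀ (norm_nonneg z) h 2
  -- (2 (Re z + Im z))² ≤ 8 |z|² ≤ 8 a² b² ≤ (2 a² + b²)²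
  nlinarith [sq_nonneg (z.re - z.im), sq_nonneg (2 * a ^ 2 - b ^ 2),
    sq_nonneg (2 * a ^ 2 + b ^ 2 - 2 * (z.re + z.im))]

section

variable {E F : Type*} [NormedAddCommGroup E] [InnerProductSpace ℂ E]
  [NormedAddCommGroup F] [InnerProductSpace ℂ F]

lemma norm_add_I_smul_sq (v w : E) :
    ‖v + Complex.I • w‖ ^ 2 = ‖v‖ ^ 2 + ‖w‖ ^ 2 - 2 * (⟪v, w⟫).im := by
  rw [@norm_add_sq ℂ, inner_smul_right, norm_smul, Complex.norm_I, RCLike.re_to_complex, Complex.I_mul_re]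
  ring

lemma norm_sq_add_norm_sq_le_of_inner_eq {e v : E} {u w : F} (h : ⟪v, e⟫ = ⟪u, w⟫) :
    ‖e‖ ^ 2 + ‖w‖ ^ 2 ≤ 2 * (‖v + Complex.I • e‖ ^ 2 + ‖w - u‖ ^ 2) := by
  have hw : ‖w - u‖ ^ 2 = ‖u‖ ^ 2 + ‖w‖ ^ 2 - 2 * (⟪u, w⟫).re := by
    rw [@norm_sub_sq ℂ, inner_re_symm, RCLike.re_to_complex]
    ring
  have hu := Complex.two_mul_re_add_im_le (norm_inner_le_norm u w)
  have hv := Complex.two_mul_re_add_im_le (h ▸ norm_inner_le_norm v e)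
  rw [norm_add_I_smul_sq, h, hw]
  linarith

end

theorem stmt_13_general
    {H1 H2 : Type*} [NormedAddCommGroup H1] [InnerProductSpace ℂ H1] [CompleteSpace H1]
    [NormedAddCommGroup H2] [InnerProductSpace ℂ H2]
    (A : H1 →ₗ.[ℂ] H2) (hd : Dense (A.domain : Set H1))
    (f : H1) (x : A.domain) (y : A.adjoint.domain)
    (h1 : A.adjoint y + Complex.I • (x : H1) = f) (h2 : A x = (y : H2))
    (xt : A.domain) (ψ : A.adjoint.domain) :
    ‖(x : H1) - (xt : H1)‖ ^ 2 + ‖A (x - xt)‖ ^ 2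
      ≤ 2 * (‖f - Complex.I • (xt : H1) - A.adjoint ψ‖ ^ 2 + ‖(ψ : H2) - A xt‖ ^ 2) := by
  have hdual : f - Complex.I • (xt : H1) - A.adjoint ψ
      = A.adjoint (y - ψ) + Complex.I • ((x : H1) - xt) := by
    rw [← h1, LinearPMap.map_sub, smul_sub]
    abel
  have hprimal : (ψ : H2) - A xt = A (x - xt) - ((y - ψ : A.adjoint.domain) : H2) := by
    rw [LinearPMap.map_sub, h2, Submodule.coe_sub]
    abel
  rw [hdual, hprimal]
  exact norm_sq_add_norm_sq_le_of_inner_eq (A.adjoint_isFormalAdjoint hd (y - ψ) (x - xt))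

/-- Primal error bound for Case II. -/
theorem stmt_13
    {H1 H2 : Type*} [NormedAddCommGroup H1] [InnerProductSpace ℂ H1] [CompleteSpace H1]
    [NormedAddCommGroup H2] [InnerProductSpace ℂ H2] [CompleteSpace H2]
    (A : H1 →ₗ.[ℂ] H2) (hd : Dense (A.domain : Set H1)) (hc : A.IsClosed)
    (f : H1) (x : A.domain) (y : A.adjoint.domain)
    (h1 : A.adjoint y + Complex.I • (x : H1) = f) (h2 : A x = (y : H2))
    (xt : A.domain) (ψ : A.adjoint.domain) :
    ‖(x : H1) - (xt : H1)‖ ^ 2 + ‖A (x - xt)‖ ^ 2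
      ≤ 2 * (‖f - Complex.I • (xt : H1) - A.adjoint ψ‖ ^ 2 + ‖(ψ : H2) - A xt‖ ^ 2) :=
  stmt_13_general A hd f x y h1 h2 xt ψ
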